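/- arXiv:2404.09605 — 3 statements merged into one kernel-verified Lean document; each statement's English description precedes it below -/
import Mathlib

section
/- Let Z₁, …, Zₙ be i.i.d. real random variables with mean μ, variance σ² > 0, and finite absolute third central moment ρ = 𝔼|Z₁ − μ|³. Then for every x ∈ ℝ and every n ≥ 1, 𝔼[exp(−∑ᵢ Zᵢ) · 1{∑ᵢ Zᵢ ≥ x}] ≤ (1/√(2π) + ρ/σ²) · e^{−x} / (σ√n). -/
/-!
With `S` the sum, `e^{-S} 1{S ≥ x} = ∫_{t > x} e^{-t} 1{x ≤ S < t} dt`, so by Tonelli the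
left side is `∫_{t > x} e^{-t} P(x ≤ S < t) dt`. Berry–Esseen at both endpoints, together with
the bound `1/√(2π)` on the normal density, gives
`P(x ≤ S < t) ≤ (t - x)/(σ√(2πn)) + ρ/(σ³√n)`, and integrating this against `e^{-t}` over
`(x, ∞)` gives `e^{-x} (1/(σ√(2πn)) + ρ/(σ³√n))`.
-/

open MeasureTheory Real Set

noncomputable def stdNormalCDF (x : ℝ) : ℝ :=
  ∫ t in Set.Iic x, Real.exp (-t^2/2) / Real.sqrt (2*Real.pi)

open Filter Topology

lemma stdNormalCDF_sub_le {u v : ℝ} (huv : u ≤ v) :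
    stdNormalCDF v - stdNormalCDF u ≤ (v - u) / sqrt (2 * π) := by
  have hf : Integrable fun t : ℝ => exp (-t ^ 2 / 2) / sqrt (2 * π) := by
    convert (integrable_exp_neg_mul_sq (b := 1 / 2) (by norm_num)).div_const (sqrt (2 * π))
      using 2 with t
    ring_nf
  have hsplit : stdNormalCDF v - stdNormalCDF u
      = ∫ t in Ioc u v, exp (-t ^ 2 / 2) / sqrt (2 * π) := by
    rw [stdNormalCDF, stdNormalCDF, ← Iic_union_Ioc_eq_Iic huv,
      setIntegral_union (Iic_disjoint_Ioc le_rfl) measurableSet_Ioc hf.integrableOn hf.integrableOn,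
      add_sub_cancel_left]
  calc stdNormalCDF v - stdNormalCDF u
      ≤ ∫ _ in Ioc u v, 1 / sqrt (2 * π) := by
        rw [hsplit]
        refine setIntegral_mono_on hf.integrableOn (integrableOn_const measure_Ioc_lt_top.ne)
          measurableSet_Ioc fun t _ => ?_
        gcongr
        exact exp_le_one_iff.2 (by nlinarith [sq_nonneg t])
    _ = (v - u) / sqrt (2 * π) := by
        rw [setIntegral_const, volume_real_Ioc_of_le huv, smul_eq_mul, mul_one_div]

lemma measureReal_Ioc_le_of_abs_cdf_sub_le (κ : Measure ℝ) [IsFiniteMeasure κ] {G : ℝ → ℝ}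
    {L B : ℝ} (hG : ∀ u v, u ≤ v → G v - G u ≤ L * (v - u))
    (hκ : ∀ t, |κ.real (Iic t) - G t| ≤ B) {u v : ℝ} (huv : u ≤ v) :
    κ.real (Ioc u v) ≤ L * (v - u) + 2 * B := by
  rw [← Iic_sdiff_Iic, measureReal_sdiff (Iic_subset_Iic.2 huv) measurableSet_Iic]
  linarith [abs_le.1 (hκ u), abs_le.1 (hκ v), hG u v huv]

lemma measureReal_Ico_le_of_abs_cdf_sub_le (κ : Measure ℝ) [IsFiniteMeasure κ] {G : ℝ → ℝ}
    {L B : ℝ} (hG : ∀ u v, u ≤ v → G v - G u ≤ L * (v - u))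
    (hκ : ∀ t, |κ.real (Iic t) - G t| ≤ B) {u v : ℝ} (huv : u ≤ v) :
    κ.real (Ico u v) ≤ L * (v - u) + 2 * B := by
  -- `Ico u v ⊆ Ioc (u - ε) v` for every `ε > 0`; let `ε → 0`.
  have hlim :
      Tendsto (fun ε => L * (v - (u - ε)) + 2 * B) (𝓝[>] 0) (𝓝 (L * (v - u) + 2 * B)) :=
    ((by fun_prop : Continuous fun ε : ℝ => L * (v - (u - ε)) + 2 * B).tendsto' 0 _
      (by simp)).mono_left nhdsWithin_le_nhds
  refine ge_of_tendsto hlim (eventually_nhdsWithin_of_forall fun ε (hε : 0 < ε) => ?_)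
  calc κ.real (Ico u v) ≤ κ.real (Ioc (u - ε) v) :=
        measureReal_mono fun s hs => ⟨by linarith [hs.1], hs.2.le⟩
    _ ≤ L * (v - (u - ε)) + 2 * B :=
        measureReal_Ioc_le_of_abs_cdf_sub_le κ hG hκ (by linarith)

lemma setLIntegral_Ici_exp_neg_eq (κ : Measure ℝ) [SFinite κ] (x : ℝ) :
    ∫⁻ s in Ici x, ENNReal.ofReal (exp (-s)) ∂κ
      = ∫⁻ t in Ioi x, ENNReal.ofReal (exp (-t)) * κ (Ico x t) := by
  -- Tonelli applied to `e^{-s} = ∫_{t > s} e^{-t} dt`.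
  set F : ℝ × ℝ → ENNReal := {p | p.1 < p.2}.indicator fun p => ENNReal.ofReal (exp (-p.2))
  have hF : Measurable F :=
    (by fun_prop : Measurable fun p : ℝ × ℝ => ENNReal.ofReal (exp (-p.2))).indicator
      (measurableSet_lt measurable_fst measurable_snd)
  have hinner_t : ∀ s ∈ Ici x, ∫⁻ t in Ioi x, F (s, t) = ENNReal.ofReal (exp (-s)) := by
    intro s hs
    change ∫⁻ t in Ioi x, (Ioi s).indicator (fun t => ENNReal.ofReal (exp (-t))) t = _
    rw [lintegral_indicator measurableSet_Ioi, Measure.restrict_restrict measurableSet_Ioi,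
      inter_eq_left.2 (Ioi_subset_Ioi hs), ← ofReal_integral_eq_lintegral_ofReal
        (integrableOn_exp_neg_Ioi s) (ae_of_all _ fun t => (exp_pos _).le), integral_exp_neg_Ioi]
  have hinner_s :
      ∀ t, ∫⁻ s in Ici x, F (s, t) ∂κ = ENNReal.ofReal (exp (-t)) * κ (Ico x t) := by
    intro t
    change ∫⁻ s in Ici x, (Iio t).indicator (fun _ => ENNReal.ofReal (exp (-t))) s ∂κ = _
    rw [lintegral_indicator_const measurableSet_Iio, Measure.restrict_apply measurableSet_Iio,
      Iio_inter_Ici, mul_comm]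
  calc ∫⁻ s in Ici x, ENNReal.ofReal (exp (-s)) ∂κ
      = ∫⁻ s in Ici x, (∫⁻ t in Ioi x, F (s, t)) ∂κ :=
        (setLIntegral_congr_fun measurableSet_Ici hinner_t).symm
    _ = ∫⁻ t in Ioi x, ∫⁻ s in Ici x, F (s, t) ∂κ :=
        lintegral_lintegral_swap (f := fun s t => F (s, t)) hF.aemeasurable
    _ = _ := lintegral_congr fun t => hinner_s t

lemma lintegral_Ioi_exp_neg_mul_affine {L C : ℝ} (hL : 0 ≤ L) (hC : 0 ≤ C) (x : ℝ) :
    ∫⁻ t in Ioi x, ENNReal.ofReal (exp (-t) * (L * (t - x) + C))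
      = ENNReal.ofReal (exp (-x) * (L + C)) := by
  set g := fun t => -exp (-t) * (L * (t - x) + L + C)
  have hderiv : ∀ t, HasDerivAt g (exp (-t) * (L * (t - x) + C)) t := fun t => by
    have hexp : HasDerivAt (fun t => -exp (-t)) (exp (-t)) t := by
      simpa using (hasDerivAt_neg t).exp.fun_neg
    have haff : HasDerivAt (fun t => L * (t - x) + L + C) L t := by
      simpa using ((((hasDerivAt_id t).sub_const x).const_mul L).add_const L).add_const C
    exact (hexp.mul haff).congr_deriv (by ring)
  have hg : Tendsto g atTop (𝓝 0) := by
    have h := ((tendsto_pow_mul_exp_neg_atTop_nhds_zero 1).const_mul (-L)).add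
      (tendsto_exp_neg_atTop_nhds_zero.const_mul (L * x - L - C))
    simp only [mul_zero, add_zero, pow_one] at h
    exact h.congr fun t => by simp only [g]; ring
  have hnonneg : ∀ t ∈ Ioi x, 0 ≤ exp (-t) * (L * (t - x) + C) := fun t ht =>
    mul_nonneg (exp_pos _).le (by nlinarith [mem_Ioi.1 ht])
  rw [← ofReal_integral_eq_lintegral_ofReal
      (integrableOn_Ioi_deriv_of_nonneg' (fun t _ => hderiv t) hnonneg hg)
      ((ae_restrict_iff' measurableSet_Ioi).2 (ae_of_all _ hnonneg)),
    integral_Ioi_of_hasDerivAt_of_nonneg' (fun t _ => hderiv t) hnonneg hg]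
  simp only [g]; ring_nf

theorem setIntegral_Ici_exp_neg_le_of_abs_cdf_sub_le (κ : Measure ℝ) [IsFiniteMeasure κ]
    {G : ℝ → ℝ} {L B : ℝ} (hL : 0 ≤ L) (hG : ∀ u v, u ≤ v → G v - G u ≤ L * (v - u))
    (hκ : ∀ t, |κ.real (Iic t) - G t| ≤ B) (x : ℝ) :
    ∫ s in Ici x, exp (-s) ∂κ ≤ exp (-x) * (L + 2 * B) := by
  have hB : 0 ≤ B := (abs_nonneg _).trans (hκ 0)
  rw [integral_eq_lintegral_of_nonneg_ae (ae_of_all _ fun s => (exp_pos _).le) (by fun_prop)]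
  refine ENNReal.toReal_le_of_le_ofReal (by positivity) ?_
  rw [setLIntegral_Ici_exp_neg_eq,
    ← lintegral_Ioi_exp_neg_mul_affine hL (by positivity : 0 ≤ 2 * B)]
  refine setLIntegral_mono (by fun_prop) fun t ht => ?_
  rw [ENNReal.ofReal_mul (exp_pos _).le, ← ofReal_measureReal]
  gcongr
  exact measureReal_Ico_le_of_abs_cdf_sub_le κ hG hκ (mem_Ioi.1 ht).le

theorem exp_tail_berry_esseen_general (μ : Measure ℝ) [IsProbabilityMeasure μ]
    (m σ ρ : ℝ) (hσ : 0 < σ)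
    (hBE : ∀ (n : ℕ), 1 ≤ n → ∀ x : ℝ,
      |((Measure.pi (fun _ : Fin n => μ))
          {y | ((∑ i, y i) - n*m)/(σ*Real.sqrt n) ≤ x}).toReal - stdNormalCDF x|
        ≤ ρ/(2*σ^3*Real.sqrt n))
    (n : ℕ) (hn : 1 ≤ n) (x : ℝ) :
    (∫ y in {y : Fin n → ℝ | x ≤ ∑ i, y i}, Real.exp (-(∑ i, y i))
        ∂(Measure.pi fun _ : Fin n => μ))
      ≤ (1/Real.sqrt (2*Real.pi) + ρ/σ^2) * Real.exp (-x) / (σ * Real.sqrt n) := by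
  set ν := Measure.pi fun _ : Fin n => μ
  set a := σ * sqrt n
  have ha : 0 < a := mul_pos hσ (sqrt_pos.2 (by exact_mod_cast hn))
  have hS : Measurable fun y : Fin n → ℝ => ∑ i, y i := by fun_prop
  have hcdf : ∀ t, |(ν.map fun y => ∑ i, y i).real (Iic t) - stdNormalCDF ((t - n * m) / a)|
      ≤ ρ / (2 * σ ^ 3 * sqrt n) := fun t => by
    have hset : (fun y : Fin n → ℝ => ∑ i, y i) ⁻¹' Iic t
        = {y | ((∑ i, y i) - n * m) / a ≤ (t - n * m) / a} := by
      ext y; simp [div_le_div_iff_of_pos_right ha]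
    rw [map_measureReal_apply hS measurableSet_Iic, hset]
    exact hBE n hn _
  have hΦ : ∀ u v, u ≤ v → stdNormalCDF ((v - n * m) / a) - stdNormalCDF ((u - n * m) / a)
      ≤ 1 / (a * sqrt (2 * π)) * (v - u) := fun u v huv => by
    calc _ ≤ ((v - n * m) / a - (u - n * m) / a) / sqrt (2 * π) :=
          stdNormalCDF_sub_le (by gcongr)
      _ = _ := by field_simp; ring
  calc ∫ y in {y : Fin n → ℝ | x ≤ ∑ i, y i}, exp (-(∑ i, y i)) ∂ν
      = ∫ s in Ici x, exp (-s) ∂(ν.map fun y => ∑ i, y i) :=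
        (setIntegral_map measurableSet_Ici continuous_neg.rexp.aestronglyMeasurable
          hS.aemeasurable).symm
    _ ≤ exp (-x) * (1 / (a * sqrt (2 * π)) + 2 * (ρ / (2 * σ ^ 3 * sqrt n))) :=
        setIntegral_Ici_exp_neg_le_of_abs_cdf_sub_le _ (by positivity) hΦ hcdf x
    _ = _ := by field_simp; ring

theorem exp_tail_berry_esseen (μ : Measure ℝ) [IsProbabilityMeasure μ]
    (m σ ρ : ℝ) (hσ : 0 < σ)
    (hm : ∫ z, z ∂μ = m) (hvar : ∫ z, (z - m)^2 ∂μ = σ^2)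
    (hρ : ∫ z, |z - m|^3 ∂μ = ρ)
    (hρfin : Integrable (fun z => |z - m|^3) μ)
    (hBE : ∀ (n : ℕ), 1 ≤ n → ∀ x : ℝ,
      |((Measure.pi (fun _ : Fin n => μ))
          {y | ((∑ i, y i) - n*m)/(σ*Real.sqrt n) ≤ x}).toReal - stdNormalCDF x|
        ≤ ρ/(2*σ^3*Real.sqrt n))
    (n : ℕ) (hn : 1 ≤ n) (x : ℝ) :
    (∫ y in {y : Fin n → ℝ | x ≤ ∑ i, y i}, Real.exp (-(∑ i, y i))
        ∂(Measure.pi fun _ : Fin n => μ))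
      ≤ (1/Real.sqrt (2*Real.pi) + ρ/σ^2) * Real.exp (-x) / (σ * Real.sqrt n) :=
  exp_tail_berry_esseen_general μ m σ ρ hσ hBE n hn x
end

section
/- Let P, Q be probability measures on (A, 𝒜) with densities p, q with respect to a σ-finite measure λ, and suppose D(P‖Q) and D(Q‖P) are both finite. Then the function Z(α) = ∫ p^α q^{1−α} dλ is continuously differentiable on (0,1) with Z′(α) = ∫ p^α q^{1−α} log(p/q) dλ. -/
/-!
Differentiate under the integral sign. Fix `δ > 0`; for `a ∈ [δ, 1 - δ]` the derivative
integrand `p^a q^(1-a) log (p/q)` is dominated by `(p + q) / δ`: where `q ≤ p` it equals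
`q t^a log t` with `t = p/q ≥ 1`, and `log t ≤ t^δ / δ` gives `t^a log t ≤ t / δ`; where `p ≤ q`
swap the roles of `p` and `q` and of `a` and `1 - a`. The same domination gives continuity of
the derivative.
-/

open MeasureTheory Real Set Filter Topology

lemma rpow_mul_log_le_div_of_one_le {t c δ : ℝ} (ht : 1 ≤ t) (hδ : 0 < δ) (hc : c ≤ 1 - δ) :
    t ^ c * log t ≤ t / δ := by
  have ht0 : 0 < t := one_pos.trans_le ht
  calc t ^ c * log t ≤ t ^ (1 - δ) * (t ^ δ / δ) :=
        mul_le_mul (rpow_le_rpow_of_exponent_le ht hc) (log_le_rpow_div ht0.le hδ)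
          (log_nonneg ht) (rpow_nonneg ht0.le _)
    _ = t / δ := by rw [mul_div_assoc', ← rpow_add ht0, sub_add_cancel, rpow_one]

lemma rpow_mul_rpow_mul_log_div_le {p q a δ : ℝ} (hq : 0 < q) (hqp : q ≤ p) (hδ : 0 < δ)
    (ha : a ≤ 1 - δ) : p ^ a * q ^ (1 - a) * log (p / q) ≤ p / δ := by
  have hp : 0 < p := hq.trans_le hqp
  calc p ^ a * q ^ (1 - a) * log (p / q) = q * ((p / q) ^ a * log (p / q)) := by
        rw [div_rpow hp.le hq.le, rpow_sub hq, rpow_one]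
        field_simp
    _ ≤ q * ((p / q) / δ) :=
        mul_le_mul_of_nonneg_left
          (rpow_mul_log_le_div_of_one_le ((one_le_div hq).2 hqp) hδ ha) hq.le
    _ = p / δ := by field_simp

lemma abs_rpow_mul_rpow_mul_log_div_le {p q a δ : ℝ} (hp : 0 ≤ p) (hq : 0 ≤ q) (hδ : 0 < δ)
    (ha : a ∈ Icc δ (1 - δ)) : |p ^ a * q ^ (1 - a) * log (p / q)| ≤ (p + q) / δ := by
  wlog hqp : q ≤ p generalizing p q a
  · convert this (a := 1 - a) hq hp ⟨by linarith [ha.2], by linarith [ha.1]⟩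
      (le_of_not_ge hqp) using 1
    · rw [sub_sub_cancel, mul_comm (q ^ (1 - a)), ← inv_div q, log_inv, mul_neg, abs_neg]
    · ring
  rcases hq.eq_or_lt with rfl | hq
  · rw [zero_rpow (by linarith [ha.2]), mul_zero, zero_mul, abs_zero]
    positivity
  rw [abs_of_nonneg (by have := log_nonneg ((one_le_div hq).2 hqp); positivity)]
  calc p ^ a * q ^ (1 - a) * log (p / q) ≤ p / δ :=
        rpow_mul_rpow_mul_log_div_le hq hqp hδ ha.2
    _ ≤ (p + q) / δ := by gcongr; linarith

lemma rpow_mul_rpow_one_sub_le_add {p q a : ℝ} (hp : 0 ≤ p) (hq : 0 ≤ q) (ha : a ∈ Icc (0 : ℝ) 1) :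
    p ^ a * q ^ (1 - a) ≤ p + q := by
  obtain ⟨ha0, ha1⟩ := ha
  calc p ^ a * q ^ (1 - a) ≤ a * p + (1 - a) * q :=
        geom_mean_le_arith_mean2_weighted ha0 (sub_nonneg.2 ha1) hp hq (add_sub_cancel _ _)
    _ ≤ p + q := by nlinarith

lemma hasDerivAt_rpow_mul_rpow_one_sub {p q a : ℝ} (hp : 0 ≤ p) (hq : 0 ≤ q)
    (ha : a ∈ Ioo (0 : ℝ) 1) :
    HasDerivAt (fun b => p ^ b * q ^ (1 - b)) (p ^ a * q ^ (1 - a) * log (p / q)) a := by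
  obtain ⟨ha0, ha1⟩ := ha
  rcases hp.eq_or_lt with rfl | hp
  · have hzero : (fun b : ℝ => (0 : ℝ) ^ b * q ^ (1 - b)) =ᶠ[𝓝 a] fun _ => 0 := by
      filter_upwards [Ioi_mem_nhds ha0] with b hb
      rw [zero_rpow hb.ne', zero_mul]
    rw [zero_rpow ha0.ne', zero_mul, zero_mul]
    exact (hasDerivAt_const a 0).congr_of_eventuallyEq hzero
  rcases hq.eq_or_lt with rfl | hq
  · have hzero : (fun b : ℝ => p ^ b * (0 : ℝ) ^ (1 - b)) =ᶠ[𝓝 a] fun _ => 0 := by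
      filter_upwards [Iio_mem_nhds ha1] with b hb
      rw [zero_rpow (sub_ne_zero.2 hb.ne'), mul_zero]
    rw [zero_rpow (sub_ne_zero.2 ha1.ne'), mul_zero, zero_mul]
    exact (hasDerivAt_const a 0).congr_of_eventuallyEq hzero
  refine ((hasStrictDerivAt_const_rpow hp a).hasDerivAt.mul
    ((hasStrictDerivAt_const_rpow hq (1 - a)).hasDerivAt.comp a
      ((hasDerivAt_id a).const_sub 1))).congr_deriv ?_
  simp only [Function.comp_apply, log_div hp.ne' hq.ne']
  ring

lemma exists_Icc_mem_nhds_of_mem_Ioo {α : ℝ} (hα : α ∈ Ioo (0 : ℝ) 1) :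
    ∃ δ > 0, Icc δ (1 - δ) ∈ 𝓝 α := by
  obtain ⟨hα0, hα1⟩ := hα
  have hδα := min_le_left α (1 - α)
  have hδα' := min_le_right α (1 - α)
  refine ⟨min α (1 - α) / 2, by positivity, Icc_mem_nhds ?_ ?_⟩ <;> linarith

section Integrals

variable {A : Type*} [MeasurableSpace A] {μ : Measure A} {p q : A → ℝ}

theorem hasDerivAt_integral_rpow_mul_rpow_one_sub (hp : Integrable p μ) (hq : Integrable q μ)
    (hp0 : 0 ≤ᵐ[μ] p) (hq0 : 0 ≤ᵐ[μ] q) {α : ℝ} (hα : α ∈ Ioo (0 : ℝ) 1) :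
    HasDerivAt (fun a : ℝ => ∫ x, p x ^ a * q x ^ (1 - a) ∂μ)
      (∫ x, p x ^ α * q x ^ (1 - α) * log (p x / q x) ∂μ) α := by
  obtain ⟨δ, hδ, hnhds⟩ := exists_Icc_mem_nhds_of_mem_Ioo hα
  have hp_meas := hp.aemeasurable
  have hq_meas := hq.aemeasurable
  have hF_int : Integrable (fun x => p x ^ α * q x ^ (1 - α)) μ := by
    refine (hp.add hq).mono' (by fun_prop) ?_
    filter_upwards [hp0, hq0] with x hpx hqx
    rw [norm_of_nonneg (mul_nonneg (rpow_nonneg hpx _) (rpow_nonneg hqx _))]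
    exact rpow_mul_rpow_one_sub_le_add hpx hqx (Ioo_subset_Icc_self hα)
  refine (hasDerivAt_integral_of_dominated_loc_of_deriv_le hnhds
    (F := fun a x => p x ^ a * q x ^ (1 - a))
    (F' := fun a x => p x ^ a * q x ^ (1 - a) * log (p x / q x))
    (bound := fun x => (p x + q x) / δ) (Eventually.of_forall fun a => by fun_prop) hF_int
    (by fun_prop) ?_ ((hp.add hq).div_const δ) ?_).2
  · filter_upwards [hp0, hq0] with x hpx hqx a ha
    exact abs_rpow_mul_rpow_mul_log_div_le hpx hqx hδ ha
  · filter_upwards [hp0, hq0] with x hpx hqx a ha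
    exact hasDerivAt_rpow_mul_rpow_one_sub hpx hqx ⟨hδ.trans_le ha.1, by linarith [ha.2]⟩

theorem continuousOn_integral_rpow_mul_rpow_one_sub_mul_log_div (hp : Integrable p μ)
    (hq : Integrable q μ) (hp0 : 0 ≤ᵐ[μ] p) (hq0 : 0 ≤ᵐ[μ] q) :
    ContinuousOn (fun α : ℝ => ∫ x, p x ^ α * q x ^ (1 - α) * log (p x / q x) ∂μ)
      (Ioo (0 : ℝ) 1) := by
  intro α hα
  obtain ⟨δ, hδ, hnhds⟩ := exists_Icc_mem_nhds_of_mem_Ioo hα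
  have hp_meas := hp.aemeasurable
  have hq_meas := hq.aemeasurable
  refine (continuousAt_of_dominated
    (F := fun a x => p x ^ a * q x ^ (1 - a) * log (p x / q x)) (bound := fun x => (p x + q x) / δ)
    (Eventually.of_forall fun a => by fun_prop) ?_ ((hp.add hq).div_const δ) ?_).continuousWithinAt
  · filter_upwards [hnhds] with a ha
    filter_upwards [hp0, hq0] with x hpx hqx
    exact abs_rpow_mul_rpow_mul_log_div_le hpx hqx hδ ha
  · filter_upwards [hp0, hq0] with x hpx hqx
    exact (hasDerivAt_rpow_mul_rpow_one_sub hpx hqx hα).continuousAt.mul continuousAt_const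

end Integrals

theorem Z_continuously_differentiable_general {A : Type*} [MeasurableSpace A]
    (μ : Measure A)
    (p q : A → ℝ)
    (hp0 : ∀ x, 0 ≤ p x) (hq0 : ∀ x, 0 ≤ q x)
    (hpint : ∫ x, p x ∂μ = 1) (hqint : ∫ x, q x ∂μ = 1) :
    (∀ α ∈ Set.Ioo (0:ℝ) 1,
      HasDerivAt (fun a : ℝ => ∫ x, p x ^ a * q x ^ (1-a) ∂μ)
        (∫ x, p x ^ α * q x ^ (1-α) * Real.log (p x / q x) ∂μ) α) ∧
    ContinuousOn (fun α : ℝ => ∫ x, p x ^ α * q x ^ (1-α) * Real.log (p x / q x) ∂μ)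
      (Set.Ioo (0:ℝ) 1) := by
  have hp : Integrable p μ := Integrable.of_integral_ne_zero (by simp [hpint])
  have hq : Integrable q μ := Integrable.of_integral_ne_zero (by simp [hqint])
  have hp0' : 0 ≤ᵐ[μ] p := Eventually.of_forall hp0
  have hq0' : 0 ≤ᵐ[μ] q := Eventually.of_forall hq0
  exact ⟨fun α hα => hasDerivAt_integral_rpow_mul_rpow_one_sub hp hq hp0' hq0' hα,
    continuousOn_integral_rpow_mul_rpow_one_sub_mul_log_div hp hq hp0' hq0'⟩

theorem Z_continuously_differentiable {A : Type*} [MeasurableSpace A]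
    (μ : Measure A) [SigmaFinite μ]
    (p q : A → ℝ) (hp : Measurable p) (hq : Measurable q)
    (hp0 : ∀ x, 0 ≤ p x) (hq0 : ∀ x, 0 ≤ q x)
    (hpint : ∫ x, p x ∂μ = 1) (hqint : ∫ x, q x ∂μ = 1)
    (hDPQ : Integrable (fun x => p x * Real.log (p x / q x)) μ)
    (hDQP : Integrable (fun x => q x * Real.log (p x / q x)) μ) :
    (∀ α ∈ Set.Ioo (0:ℝ) 1,
      HasDerivAt (fun a : ℝ => ∫ x, p x ^ a * q x ^ (1-a) ∂μ)
        (∫ x, p x ^ α * q x ^ (1-α) * Real.log (p x / q x) ∂μ) α) ∧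
    ContinuousOn (fun α : ℝ => ∫ x, p x ^ α * q x ^ (1-α) * Real.log (p x / q x) ∂μ)
      (Set.Ioo (0:ℝ) 1) :=
  Z_continuously_differentiable_general μ p q hp0 hq0 hpint hqint
end

section
/- Under the same hypotheses, D(Q_α‖Q) is differentiable in α ∈ (0,1) with d/dα D(Q_α‖Q) = α·Var(log(dP/dQ)(X^{(α)})), where X^{(α)} ∼ Q_α. -/
open MeasureTheory Real Set

noncomputable def Zfun {A : Type*} [MeasurableSpace A] (μ : Measure A) (p q : A → ℝ) (a : ℝ) : ℝ :=
  ∫ x, p x ^ a * q x ^ (1-a) ∂μ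

/-- Density of the tilted measure `Q_α`. -/
noncomputable def qdens {A : Type*} [MeasurableSpace A] (μ : Measure A) (p q : A → ℝ) (a : ℝ) (x : A) : ℝ :=
  p x ^ a * q x ^ (1-a) / Zfun μ p q a

/-- `D(Q_α ‖ P)`. -/
noncomputable def DtiltP {A : Type*} [MeasurableSpace A] (μ : Measure A) (p q : A → ℝ) (a : ℝ) : ℝ :=
  ∫ x, qdens μ p q a x * Real.log (qdens μ p q a x / p x) ∂μ

/-- `D(Q_α ‖ Q)`. -/
noncomputable def DtiltQ {A : Type*} [MeasurableSpace A] (μ : Measure A) (p q : A → ℝ) (a : ℝ) : ℝ :=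
  ∫ x, qdens μ p q a x * Real.log (qdens μ p q a x / q x) ∂μ

/-- Mean of the log-likelihood ratio `log(p/q)` under `Q_α`. -/
noncomputable def tiltMean {A : Type*} [MeasurableSpace A] (μ : Measure A) (p q : A → ℝ) (a : ℝ) : ℝ :=
  ∫ x, qdens μ p q a x * Real.log (p x / q x) ∂μ

/-- Variance of `log(p/q)` under `Q_α`. -/
noncomputable def tiltVar {A : Type*} [MeasurableSpace A] (μ : Measure A) (p q : A → ℝ) (a : ℝ) : ℝ :=
  (∫ x, qdens μ p q a x * (Real.log (p x / q x))^2 ∂μ) - (tiltMean μ p q a)^2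

/-- Third central moment of `log(p/q)` under `Q_α`. -/
noncomputable def tiltM3 {A : Type*} [MeasurableSpace A] (μ : Measure A) (p q : A → ℝ) (a : ℝ) : ℝ :=
  ∫ x, qdens μ p q a x * (Real.log (p x / q x) - tiltMean μ p q a)^3 ∂μ

/-- Absolute third central moment of `log(p/q)` under `Q_α`. -/
noncomputable def tiltM3abs {A : Type*} [MeasurableSpace A] (μ : Measure A) (p q : A → ℝ) (a : ℝ) : ℝ :=
  ∫ x, qdens μ p q a x * |Real.log (p x / q x) - tiltMean μ p q a|^3 ∂μ

/-! With `L = log (p / q)` and `Z(a) = ∫ q e^{aL}` over the common support of `p` and `q`, one has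
`D(Q_a ‖ Q) = a Z'(a) / Z(a) - log Z(a)`, the relative entropy within an exponential family.
Differentiating under the integral sign, `Z' = ∫ q e^{aL} L` and `Z'' = ∫ q e^{aL} L²`, the
integrands being dominated for `0 < a < 1` by `(p + q) |L|^k` (weighted AM–GM), which is
integrable for `k ≤ 3`. The derivative `a (Z''/Z - (Z'/Z)²)` is `a` times the variance of `L`
under `Q_a`. When the common support is null, all the quantities vanish identically. -/

open Filter Topology

theorem hasDerivAt_mul_div_sub_log {Z N : ℝ → ℝ} {M α : ℝ} (hZ : HasDerivAt Z (N α) α)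
    (hN : HasDerivAt N M α) (hZ0 : Z α ≠ 0) :
    HasDerivAt (fun a => a * N a / Z a - log (Z a)) (α * (M / Z α - (N α / Z α) ^ 2)) α := by
  refine ((((hasDerivAt_id' α).mul hN).div hZ hZ0).sub (hZ.log hZ0)).congr_deriv ?_
  simp only [Pi.mul_apply]
  field_simp
  ring

theorem integrable_mul_abs_pow_of_le {A : Type*} [MeasurableSpace A] {μ : Measure A}
    {w f : A → ℝ} (hw0 : ∀ x, 0 ≤ w x) (hw : Integrable w μ) (hf : AEStronglyMeasurable f μ)
    {m n : ℕ} (hmn : m ≤ n) (hn : Integrable (fun x => w x * |f x| ^ n) μ) :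
    Integrable (fun x => w x * |f x| ^ m) μ := by
  refine (hw.add hn).mono' (hw.aestronglyMeasurable.mul (hf.norm.pow m)) (ae_of_all _ fun x => ?_)
  have hpow : |f x| ^ m ≤ 1 + |f x| ^ n := by
    rcases le_total |f x| 1 with h | h
    · linarith [pow_le_one₀ (abs_nonneg (f x)) h (n := m), pow_nonneg (abs_nonneg (f x)) n]
    · linarith [pow_le_pow_right₀ h hmn]
  rw [Pi.add_apply, norm_mul, norm_pow, Real.norm_eq_abs, Real.norm_eq_abs, abs_abs,
    abs_of_nonneg (hw0 x)]
  nlinarith [hw0 x, hpow]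

namespace Tilted

variable {A : Type*} {p q : A → ℝ}

/-- Unnormalised density of `Q_a`, written as `q · exp (a · log (p / q))` on the common support so
that it is smooth in `a` at every point, not only for `0 < a < 1`. -/
noncomputable def density (p q : A → ℝ) (a : ℝ) : A → ℝ :=
  {x | 0 < p x ∧ 0 < q x}.indicator fun x => q x * exp (a * log (p x / q x))

theorem density_eq_rpow (hp0 : ∀ x, 0 ≤ p x) (hq0 : ∀ x, 0 ≤ q x) {a : ℝ} (ha : a ∈ Ioo 0 1)
    (x : A) : density p q a x = p x ^ a * q x ^ (1 - a) := by
  by_cases hx : x ∈ {x | 0 < p x ∧ 0 < q x}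
  · rw [density, indicator_of_mem hx]
    obtain ⟨hpx, hqx⟩ := hx
    rw [rpow_def_of_pos hpx, rpow_def_of_pos hqx, log_div hpx.ne' hqx.ne', ← exp_add]
    nth_rewrite 1 [← exp_log hqx]
    rw [← exp_add]
    congr 1
    ring
  · rw [density, indicator_of_notMem hx]
    rcases not_and_or.mp hx with h | h
    · rw [(not_lt.mp h).antisymm (hp0 x), zero_rpow ha.1.ne', zero_mul]
    · rw [(not_lt.mp h).antisymm (hq0 x), zero_rpow (sub_ne_zero.mpr ha.2.ne'), mul_zero]

theorem density_nonneg (hq0 : ∀ x, 0 ≤ q x) (a : ℝ) (x : A) : 0 ≤ density p q a x :=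
  indicator_nonneg (fun y _ => mul_nonneg (hq0 y) (exp_nonneg _)) x

theorem density_le_add (hp0 : ∀ x, 0 ≤ p x) (hq0 : ∀ x, 0 ≤ q x) {a : ℝ} (ha : a ∈ Ioo 0 1)
    (x : A) : density p q a x ≤ p x + q x := by
  rw [density_eq_rpow hp0 hq0 ha]
  have hamgm := geom_mean_le_arith_mean2_weighted ha.1.le (sub_nonneg.mpr ha.2.le) (hp0 x)
    (hq0 x) (by ring)
  nlinarith [hp0 x, hq0 x, ha.1, ha.2]

theorem hasDerivAt_density (a : ℝ) (x : A) :
    HasDerivAt (fun b => density p q b x) (density p q a x * log (p x / q x)) a := by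
  by_cases hx : x ∈ {x | 0 < p x ∧ 0 < q x}
  · simp only [density, indicator_of_mem hx]
    refine ((((hasDerivAt_id a).mul_const (log (p x / q x))).exp).const_mul (q x)).congr_deriv ?_
    simp only [id, one_mul]
    ring
  · simp only [density, indicator_of_notMem hx, zero_mul]
    exact hasDerivAt_const a 0

theorem support_density (a : ℝ) :
    Function.support (density p q a) = {x | 0 < p x ∧ 0 < q x} := by
  rw [density, support_indicator, inter_eq_left]
  exact fun x hx => (mul_pos hx.2 (exp_pos _)).ne'

theorem norm_density_mul_pow_le (hp0 : ∀ x, 0 ≤ p x) (hq0 : ∀ x, 0 ≤ q x) {a : ℝ}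
    (ha : a ∈ Ioo 0 1) (k : ℕ) (x : A) :
    ‖density p q a x * log (p x / q x) ^ k‖ ≤ (p x + q x) * |log (p x / q x)| ^ k := by
  rw [norm_mul, norm_pow, Real.norm_eq_abs, Real.norm_eq_abs,
    abs_of_nonneg (density_nonneg hq0 a x)]
  gcongr
  exact density_le_add hp0 hq0 ha x

variable [MeasurableSpace A] {μ : Measure A}

theorem measurable_density (hp : Measurable p) (hq : Measurable q) (a : ℝ) :
    Measurable (density p q a) :=
  (hq.mul ((hp.div hq).log.const_mul a).exp).indicator
    ((measurableSet_lt measurable_const hp).inter (measurableSet_lt measurable_const hq))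

noncomputable def moment (μ : Measure A) (p q : A → ℝ) (k : ℕ) (a : ℝ) : ℝ :=
  ∫ x, density p q a x * log (p x / q x) ^ k ∂μ

theorem moment_zero (a : ℝ) : moment μ p q 0 a = ∫ x, density p q a x ∂μ := by
  simp only [moment, pow_zero, mul_one]

theorem moment_one (a : ℝ) :
    moment μ p q 1 a = ∫ x, density p q a x * log (p x / q x) ∂μ := by
  simp only [moment, pow_one]

theorem integrable_density_mul_pow (hp : Measurable p) (hq : Measurable q) (hp0 : ∀ x, 0 ≤ p x)
    (hq0 : ∀ x, 0 ≤ q x) {a : ℝ} (ha : a ∈ Ioo 0 1) {k : ℕ}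
    (hk : Integrable (fun x => (p x + q x) * |log (p x / q x)| ^ k) μ) :
    Integrable (fun x => density p q a x * log (p x / q x) ^ k) μ :=
  hk.mono' ((measurable_density hp hq a).mul ((hp.div hq).log.pow_const k)).aestronglyMeasurable
    (ae_of_all _ (norm_density_mul_pow_le hp0 hq0 ha k))

theorem hasDerivAt_moment (hp : Measurable p) (hq : Measurable q) (hp0 : ∀ x, 0 ≤ p x)
    (hq0 : ∀ x, 0 ≤ q x) {α : ℝ} (hα : α ∈ Ioo 0 1) {k : ℕ}
    (hk : Integrable (fun x => (p x + q x) * |log (p x / q x)| ^ k) μ)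
    (hk' : Integrable (fun x => (p x + q x) * |log (p x / q x)| ^ (k + 1)) μ) :
    HasDerivAt (moment μ p q k) (moment μ p q (k + 1) α) α :=
  (hasDerivAt_integral_of_dominated_loc_of_deriv_le (Ioo_mem_nhds hα.1 hα.2)
    (F := fun a x => density p q a x * log (p x / q x) ^ k)
    (F' := fun a x => density p q a x * log (p x / q x) ^ (k + 1))
    (Eventually.of_forall fun a =>
      ((measurable_density hp hq a).mul ((hp.div hq).log.pow_const k)).aestronglyMeasurable)
    (integrable_density_mul_pow hp hq hp0 hq0 hα hk)
    ((measurable_density hp hq α).mul ((hp.div hq).log.pow_const (k + 1))).aestronglyMeasurable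
    (ae_of_all _ fun x a ha => norm_density_mul_pow_le hp0 hq0 ha (k + 1) x) hk'
    (ae_of_all _ fun x a _ => by
      refine ((hasDerivAt_density a x).mul_const (log (p x / q x) ^ k)).congr_deriv ?_
      ring)).2

theorem moment_of_null (hS : μ {x | 0 < p x ∧ 0 < q x} = 0) (k : ℕ) (a : ℝ) :
    moment μ p q k a = 0 :=
  integral_eq_zero_of_ae <| (measure_eq_zero_iff_ae_notMem.mp hS).mono fun x hx => by
    simp [density, indicator_of_notMem hx]

theorem moment_zero_pos (hS : μ {x | 0 < p x ∧ 0 < q x} ≠ 0) (hq0 : ∀ x, 0 ≤ q x) {a : ℝ}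
    (h0 : Integrable (density p q a) μ) : 0 < moment μ p q 0 a := by
  rw [moment_zero, integral_pos_iff_support_of_nonneg (density_nonneg hq0 a) h0, support_density]
  exact pos_iff_ne_zero.mpr hS

theorem Zfun_eq_moment_zero (hp0 : ∀ x, 0 ≤ p x) (hq0 : ∀ x, 0 ≤ q x) {a : ℝ}
    (ha : a ∈ Ioo 0 1) : Zfun μ p q a = moment μ p q 0 a := by
  simp only [Zfun, moment_zero, density_eq_rpow hp0 hq0 ha]

theorem qdens_eq_density_div (hp0 : ∀ x, 0 ≤ p x) (hq0 : ∀ x, 0 ≤ q x) {a : ℝ}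
    (ha : a ∈ Ioo 0 1) (x : A) :
    qdens μ p q a x = density p q a x / moment μ p q 0 a := by
  rw [qdens, Zfun_eq_moment_zero hp0 hq0 ha, density_eq_rpow hp0 hq0 ha]

theorem integral_qdens_mul (hp0 : ∀ x, 0 ≤ p x) (hq0 : ∀ x, 0 ≤ q x) {a : ℝ}
    (ha : a ∈ Ioo 0 1) (g : A → ℝ) :
    ∫ x, qdens μ p q a x * g x ∂μ = (∫ x, density p q a x * g x ∂μ) / moment μ p q 0 a := by
  simp only [qdens_eq_density_div hp0 hq0 ha, div_mul_eq_mul_div, integral_div]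

theorem tiltVar_eq_moments (hp0 : ∀ x, 0 ≤ p x) (hq0 : ∀ x, 0 ≤ q x) {a : ℝ}
    (ha : a ∈ Ioo 0 1) :
    tiltVar μ p q a =
      moment μ p q 2 a / moment μ p q 0 a - (moment μ p q 1 a / moment μ p q 0 a) ^ 2 := by
  simp only [tiltVar, tiltMean, integral_qdens_mul hp0 hq0 ha, moment, pow_one]

theorem DtiltQ_eq_moments (hp0 : ∀ x, 0 ≤ p x) (hq0 : ∀ x, 0 ≤ q x) {a : ℝ}
    (ha : a ∈ Ioo 0 1) (h0 : Integrable (density p q a) μ)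
    (h1 : Integrable (fun x => density p q a x * log (p x / q x)) μ) :
    DtiltQ μ p q a =
      a * moment μ p q 1 a / moment μ p q 0 a - log (moment μ p q 0 a) := by
  set Z := moment μ p q 0 a with hZ_def
  have hpointwise : ∀ x, qdens μ p q a x * log (qdens μ p q a x / q x) =
      a / Z * (density p q a x * log (p x / q x)) - log Z / Z * density p q a x := by
    intro x
    rw [qdens_eq_density_div hp0 hq0 ha, ← hZ_def]
    -- for `Z = 0` both sides vanish, as `x / 0 = 0` and `log 0 = 0`
    by_cases hZ : Z = 0
    · simp [hZ]
    by_cases hx : x ∈ {x | 0 < p x ∧ 0 < q x}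
    · have hqdens : density p q a x / Z / q x = exp (a * log (p x / q x)) / Z := by
        rw [density, indicator_of_mem hx]
        field_simp [hx.2.ne']
      rw [hqdens, log_div (exp_ne_zero _) hZ, log_exp]
      ring
    · simp [density, indicator_of_notMem hx]
  rw [DtiltQ, integral_congr_ae (ae_of_all _ hpointwise),
    integral_sub (h1.const_mul _) (h0.const_mul _),
    integral_const_mul, integral_const_mul, ← moment_zero, ← moment_one, ← hZ_def,
    div_mul_cancel_of_imp (fun h => by simp [h])]
  ring

end Tilted

open Tilted

theorem DtiltQ_deriv_general {A : Type*} [MeasurableSpace A]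
    (μ : Measure A)
    (p q : A → ℝ) (hp : Measurable p) (hq : Measurable q)
    (hp0 : ∀ x, 0 ≤ p x) (hq0 : ∀ x, 0 ≤ q x)
    (hpint : ∫ x, p x ∂μ = 1) (hqint : ∫ x, q x ∂μ = 1)
    (hP3 : Integrable (fun x => p x * |Real.log (p x / q x)|^3) μ)
    (hQ3 : Integrable (fun x => q x * |Real.log (p x / q x)|^3) μ) :
    ∀ α ∈ Set.Ioo (0:ℝ) 1,
      HasDerivAt (DtiltQ μ p q) (α * tiltVar μ p q α) α := by
  intro α hα
  have hpq : Integrable (fun x => p x + q x) μ :=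
    (Integrable.of_integral_ne_zero (by simp [hpint])).add
      (Integrable.of_integral_ne_zero (by simp [hqint]))
  have h3 : Integrable (fun x => (p x + q x) * |log (p x / q x)| ^ 3) μ :=
    (hP3.add hQ3).congr (ae_of_all _ fun x => (add_mul _ _ _).symm)
  have hmom : ∀ k ≤ 3, Integrable (fun x => (p x + q x) * |log (p x / q x)| ^ k) μ :=
    fun k hk => integrable_mul_abs_pow_of_le (fun x => add_nonneg (hp0 x) (hq0 x)) hpq
      (hp.div hq).log.aestronglyMeasurable hk h3
  have hint : ∀ k ≤ 3, ∀ a ∈ Ioo (0 : ℝ) 1,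
      Integrable (fun x => density p q a x * log (p x / q x) ^ k) μ :=
    fun k hk a ha => integrable_density_mul_pow hp hq hp0 hq0 ha (hmom k hk)
  have hD : DtiltQ μ p q =ᶠ[𝓝 α]
      fun a => a * moment μ p q 1 a / moment μ p q 0 a - log (moment μ p q 0 a) :=
    eventually_of_mem (Ioo_mem_nhds hα.1 hα.2) fun a ha =>
      DtiltQ_eq_moments hp0 hq0 ha (by simpa using hint 0 (by norm_num) a ha)
        (by simpa using hint 1 (by norm_num) a ha)
  rw [tiltVar_eq_moments hp0 hq0 hα]
  by_cases hS : μ {x | 0 < p x ∧ 0 < q x} = 0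
  · simp only [moment_of_null hS, div_zero, log_zero, sub_zero] at hD ⊢
    simpa using (hasDerivAt_const α 0).congr_of_eventuallyEq hD
  have hZ := hasDerivAt_moment hp hq hp0 hq0 hα (hmom 0 (by norm_num)) (hmom 1 (by norm_num))
  have hN := hasDerivAt_moment hp hq hp0 hq0 hα (hmom 1 (by norm_num)) (hmom 2 (by norm_num))
  have hZ0 := moment_zero_pos hS hq0 (by simpa using hint 0 (by norm_num) α hα)
  exact (hasDerivAt_mul_div_sub_log hZ hN hZ0.ne').congr_of_eventuallyEq hD

theorem DtiltQ_deriv {A : Type*} [MeasurableSpace A]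
    (μ : Measure A) [SigmaFinite μ]
    (p q : A → ℝ) (hp : Measurable p) (hq : Measurable q)
    (hp0 : ∀ x, 0 ≤ p x) (hq0 : ∀ x, 0 ≤ q x)
    (hpint : ∫ x, p x ∂μ = 1) (hqint : ∫ x, q x ∂μ = 1)
    (hP3 : Integrable (fun x => p x * |Real.log (p x / q x)|^3) μ)
    (hQ3 : Integrable (fun x => q x * |Real.log (p x / q x)|^3) μ) :
    ∀ α ∈ Set.Ioo (0:ℝ) 1,
      HasDerivAt (DtiltQ μ p q) (α * tiltVar μ p q α) α :=
  DtiltQ_deriv_general μ p q hp hq hp0 hq0 hpint hqint hP3 hQ3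
end
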